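/- arXiv:2309.04429 — 5 statements merged into one kernel-verified Lean document; each statement's English description precedes it below -/
import Mathlib

section
/- For the approximate Eddington factor ψ_a(h) = 1/3 + (2/15)(3h² − h³ + 3h⁴), the inequality ψ_a(h) − h² − (1/4)(1 − ψ_a(h))² ≥ 0 holds for all h ∈ [0,1]. -/
/-- Approximate Minerbo-closure Eddington factor. -/
noncomputable def ψa (h : ℝ) : ℝ := 1/3 + (2/15) * (3*h^2 - h^3 + 3*h^4)

theorem stmt1 : ∀ h ∈ Set.Icc (0:ℝ) 1, ψa h - h^2 - (1/4) * (1 - ψa h)^2 ≥ 0 := by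
  rintro h ⟨h0, h1⟩
  unfold ψa
  nlinarith [sq_nonneg h, sq_nonneg (1-h), sq_nonneg (h*(1-h)), sq_nonneg (h^2*(1-h)), sq_nonneg (h^3*(1-h)), mul_nonneg h0 (sub_nonneg.2 h1), sq_nonneg (h^2*(1-h)^2), mul_nonneg (mul_nonneg h0 h0) (sub_nonneg.2 h1), sq_nonneg (h*(1-h)^2)]
end

section
/- Let f : S² → ℝ be nonnegative with positive mean over S², and let v̂ ∈ ℝ³ with |v̂| < 1. Fix i ∈ {1,2,3}. Define the weighted moments D± = (1/4π)∫_{S²} (1 ± v̂ⁱ)(1 ± ℓⁱ(ω)) f(ω) dω and I±_j = (1/4π)∫_{S²} (1 ± v̂ⁱ)(1 ± ℓⁱ(ω)) f(ω) ℓ_j(ω) dω, where ℓ(ω) ∈ S² is the unit direction vector. Then (D±, I±) lies in the realizable set, i.e., D± > 0 and |I±| ≤ D±. -/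
open MeasureTheory Metric

/-- The surface measure on the unit sphere in ℝ³ (induced by Lebesgue measure). -/
noncomputable def σS : Measure (sphere (0 : EuclideanSpace ℝ (Fin 3)) 1) :=
  (volume : Measure (EuclideanSpace ℝ (Fin 3))).toSphere

open Set
open scoped Pointwise

lemma sigma_singleton (x : sphere (0 : EuclideanSpace ℝ (Fin 3)) 1) : σS {x} = 0 := by
  rw [σS, Measure.toSphere_apply' _ (measurableSet_singleton x)]
  have hsub : (Ioo (0:ℝ) 1 • ((Subtype.val) '' ({x} : Set (sphere (0 : EuclideanSpace ℝ (Fin 3)) 1))))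
      ⊆ (Submodule.span ℝ {(x : EuclideanSpace ℝ (Fin 3))} : Submodule ℝ _) := by
    rintro y ⟨r, hr, z, hz, rfl⟩
    simp only [image_singleton, mem_singleton_iff] at hz
    subst hz
    exact Submodule.smul_mem _ _ (Submodule.mem_span_singleton_self _)
  have hne : (Submodule.span ℝ {(x : EuclideanSpace ℝ (Fin 3))}) ≠ ⊤ := by
    intro h
    have h1 : Module.finrank ℝ (EuclideanSpace ℝ (Fin 3)) ≤ 1 := by
      rw [← finrank_top ℝ (EuclideanSpace ℝ (Fin 3)), ← h]
      calc Module.finrank ℝ (Submodule.span ℝ ({(x : EuclideanSpace ℝ (Fin 3))} : Set _))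
          ≤ ({(x : EuclideanSpace ℝ (Fin 3))} : Set _).toFinset.card := finrank_span_le_card _
        _ ≤ 1 := by simp
    simp [finrank_euclideanSpace_fin] at h1
  rw [measure_mono_null hsub (Measure.addHaar_submodule _ _ hne)]
  simp

lemma coord_le (ω : sphere (0 : EuclideanSpace ℝ (Fin 3)) 1) (j : Fin 3) :
    |(ω : EuclideanSpace ℝ (Fin 3)) j| ≤ 1 := by
  have h1 : ‖(ω : EuclideanSpace ℝ (Fin 3))‖ = 1 := norm_eq_of_mem_sphere ω
  rw [EuclideanSpace.norm_eq] at h1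
  have hsum : ∑ k, ‖(ω : EuclideanSpace ℝ (Fin 3)) k‖ ^ 2 = 1 := by
    have h0 : (0:ℝ) ≤ ∑ k, ‖(ω : EuclideanSpace ℝ (Fin 3)) k‖ ^ 2 :=
      Finset.sum_nonneg fun k _ => sq_nonneg _
    nlinarith [Real.sq_sqrt h0]
  have h2 : ‖(ω : EuclideanSpace ℝ (Fin 3)) j‖ ^ 2 ≤ ∑ k, ‖(ω : EuclideanSpace ℝ (Fin 3)) k‖ ^ 2 :=
    Finset.single_le_sum (f := fun k => ‖(ω : EuclideanSpace ℝ (Fin 3)) k‖ ^ 2) (fun k _ => sq_nonneg _) (Finset.mem_univ j)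
  rw [← Real.norm_eq_abs]
  nlinarith [norm_nonneg ((ω : EuclideanSpace ℝ (Fin 3)) j)]

lemma sphere_sum_sq (ω : sphere (0 : EuclideanSpace ℝ (Fin 3)) 1) :
    ∑ k, ((ω : EuclideanSpace ℝ (Fin 3)) k) ^ 2 = 1 := by
  have h1 : ‖(ω : EuclideanSpace ℝ (Fin 3))‖ = 1 := norm_eq_of_mem_sphere ω
  rw [EuclideanSpace.norm_eq] at h1
  have h0 : (0:ℝ) ≤ ∑ k, ‖(ω : EuclideanSpace ℝ (Fin 3)) k‖ ^ 2 :=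
    Finset.sum_nonneg fun k _ => sq_nonneg _
  have h2 : ∑ k, ‖(ω : EuclideanSpace ℝ (Fin 3)) k‖ ^ 2 = 1 := by
    nlinarith [Real.sq_sqrt h0]
  simpa [Real.norm_eq_abs, sq_abs] using h2

lemma zero_set_subsingleton (s : ℝ) (hs2 : s ^ 2 = 1) (i : Fin 3) :
    ({ω : sphere (0 : EuclideanSpace ℝ (Fin 3)) 1 |
        1 + s * (ω : EuclideanSpace ℝ (Fin 3)) i = 0}).Subsingleton := by
  have key : ∀ ω ∈ {ω : sphere (0 : EuclideanSpace ℝ (Fin 3)) 1 |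
      1 + s * (ω : EuclideanSpace ℝ (Fin 3)) i = 0},
      ∀ j, (ω : EuclideanSpace ℝ (Fin 3)) j = if j = i then -s else 0 := by
    intro ω hω j
    simp only [mem_setOf_eq] at hω
    have hωi : (ω : EuclideanSpace ℝ (Fin 3)) i = -s := by
      linear_combination s * hω - (ω : EuclideanSpace ℝ (Fin 3)) i * hs2
    by_cases hj : j = i
    · rw [if_pos hj, hj]; exact hωi
    · simp only [hj, if_false]
      have hsum := sphere_sum_sq ω
      have hsplit := Finset.add_sum_erase Finset.univ
        (fun k => ((ω : EuclideanSpace ℝ (Fin 3)) k) ^ 2) (Finset.mem_univ i)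
      have hsq : ((ω : EuclideanSpace ℝ (Fin 3)) i) ^ 2 = 1 := by
        rw [hωi]; simpa using hs2
      have hzero : ∑ k ∈ Finset.univ.erase i, ((ω : EuclideanSpace ℝ (Fin 3)) k) ^ 2 = 0 := by
        simp only at hsplit
        linarith [hsplit, hsum, hsq]
      have := (Finset.sum_eq_zero_iff_of_nonneg (fun k _ => sq_nonneg _)).mp hzero j
        (Finset.mem_erase.mpr ⟨hj, Finset.mem_univ j⟩)
      exact pow_eq_zero_iff (n := 2) (by norm_num) |>.mp this
  intro ω hω ω' hω'
  apply Subtype.ext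
  ext j
  rw [key ω hω j, key ω' hω' j]

theorem stmt9 (f : sphere (0 : EuclideanSpace ℝ (Fin 3)) 1 → ℝ)
    (hf_nonneg : ∀ ω, 0 ≤ f ω) (hf_int : Integrable f σS)
    (hf_pos : 0 < (1/(4*Real.pi)) * ∫ ω, f ω ∂σS)
    (v : Fin 3 → ℝ) (hv : Real.sqrt (∑ i, v i ^ 2) < 1)
    (i : Fin 3) (s : ℝ) (hs : s = 1 ∨ s = -1) :
    0 < (1/(4*Real.pi)) *
        ∫ ω, (1 + s * v i) * (1 + s * (ω : EuclideanSpace ℝ (Fin 3)) i) * f ω ∂σS ∧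
    Real.sqrt (∑ j, ((1/(4*Real.pi)) *
        ∫ ω, (1 + s * v i) * (1 + s * (ω : EuclideanSpace ℝ (Fin 3)) i) * f ω *
          (ω : EuclideanSpace ℝ (Fin 3)) j ∂σS) ^ 2)
      ≤ (1/(4*Real.pi)) *
        ∫ ω, (1 + s * v i) * (1 + s * (ω : EuclideanSpace ℝ (Fin 3)) i) * f ω ∂σS := by
  have hc : 0 < (1:ℝ)/(4*Real.pi) := by positivity
  have hs2 : s ^ 2 = 1 := by rcases hs with h | h <;> simp [h]
  have hsabs : |s| = 1 := by rcases hs with h | h <;> simp [h]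
  -- 1 + s * v i > 0
  have ha : 0 < 1 + s * v i := by
    have h0 : (0:ℝ) ≤ ∑ j, v j ^ 2 := Finset.sum_nonneg fun _ _ => sq_nonneg _
    have h1 : ∑ j, v j ^ 2 < 1 := by
      nlinarith [Real.sq_sqrt h0, Real.sqrt_nonneg (∑ j, v j ^ 2)]
    have h2 : v i ^ 2 ≤ ∑ j, v j ^ 2 :=
      Finset.single_le_sum (f := fun j => v j ^ 2) (fun _ _ => sq_nonneg _) (Finset.mem_univ i)
    nlinarith [sq_abs (s * v i), abs_mul s (v i), abs_nonneg (v i), sq_abs (v i),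
      neg_abs_le (s * v i), abs_nonneg (s * v i)]
  -- weight nonneg
  have hw0 : ∀ ω : sphere (0 : EuclideanSpace ℝ (Fin 3)) 1,
      0 ≤ 1 + s * (ω : EuclideanSpace ℝ (Fin 3)) i := by
    intro ω
    have h := coord_le ω i
    have h2 : |s * (ω : EuclideanSpace ℝ (Fin 3)) i| ≤ 1 := by
      rw [abs_mul, hsabs, one_mul]; exact h
    linarith [neg_abs_le (s * (ω : EuclideanSpace ℝ (Fin 3)) i)]
  have hwle : ∀ ω : sphere (0 : EuclideanSpace ℝ (Fin 3)) 1,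
      ‖1 + s * (ω : EuclideanSpace ℝ (Fin 3)) i‖ ≤ 2 := by
    intro ω
    have h := coord_le ω i
    have h2 : |s * (ω : EuclideanSpace ℝ (Fin 3)) i| ≤ 1 := by
      rw [abs_mul, hsabs, one_mul]; exact h
    rw [Real.norm_eq_abs, abs_of_nonneg (hw0 ω)]
    linarith [le_abs_self (s * (ω : EuclideanSpace ℝ (Fin 3)) i)]
  have hWcont : Continuous (fun ω : sphere (0 : EuclideanSpace ℝ (Fin 3)) 1 =>
      1 + s * (ω : EuclideanSpace ℝ (Fin 3)) i) :=
    continuous_const.add (continuous_const.mul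
      ((EuclideanSpace.proj i).continuous.comp continuous_subtype_val))
  have hg_int : Integrable
      (fun ω : sphere (0 : EuclideanSpace ℝ (Fin 3)) 1 =>
        (1 + s * (ω : EuclideanSpace ℝ (Fin 3)) i) * f ω) σS :=
    hf_int.bdd_mul hWcont.aestronglyMeasurable (Filter.Eventually.of_forall hwle)
  have hg_nonneg : ∀ ω : sphere (0 : EuclideanSpace ℝ (Fin 3)) 1,
      0 ≤ (1 + s * (ω : EuclideanSpace ℝ (Fin 3)) i) * f ω :=
    fun ω => mul_nonneg (hw0 ω) (hf_nonneg ω)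
  -- positivity of ∫ g
  have hf_posint : 0 < ∫ ω, f ω ∂σS := by
    by_contra h
    push_neg at h
    nlinarith
  have hsupf : 0 < σS (Function.support f) :=
    (integral_pos_iff_support_of_nonneg (fun ω => hf_nonneg ω) hf_int).mp hf_posint
  have hZ : σS {ω : sphere (0 : EuclideanSpace ℝ (Fin 3)) 1 |
      1 + s * (ω : EuclideanSpace ℝ (Fin 3)) i = 0} = 0 := by
    rcases (zero_set_subsingleton s hs2 i).eq_empty_or_singleton with h | ⟨x, h⟩
    · rw [h]; simp
    · rw [h]; exact sigma_singleton x
  have hsupg : 0 < σS (Function.support fun ω : sphere (0 : EuclideanSpace ℝ (Fin 3)) 1 =>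
      (1 + s * (ω : EuclideanSpace ℝ (Fin 3)) i) * f ω) := by
    have hsub : Function.support f ⊆
        (Function.support fun ω : sphere (0 : EuclideanSpace ℝ (Fin 3)) 1 =>
          (1 + s * (ω : EuclideanSpace ℝ (Fin 3)) i) * f ω) ∪
        {ω : sphere (0 : EuclideanSpace ℝ (Fin 3)) 1 |
          1 + s * (ω : EuclideanSpace ℝ (Fin 3)) i = 0} := by
      intro ω hω
      by_cases h : 1 + s * (ω : EuclideanSpace ℝ (Fin 3)) i = 0
      · exact Or.inr h
      · exact Or.inl (mul_ne_zero h hω)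
    by_contra h
    push_neg at h
    have h0 : σS (Function.support fun ω : sphere (0 : EuclideanSpace ℝ (Fin 3)) 1 =>
        (1 + s * (ω : EuclideanSpace ℝ (Fin 3)) i) * f ω) = 0 := le_antisymm h zero_le
    have : σS (Function.support f) = 0 :=
      measure_mono_null hsub (measure_union_null h0 hZ)
    exact absurd this (ne_of_gt hsupf)
  have hgpos : 0 < ∫ ω, (1 + s * (ω : EuclideanSpace ℝ (Fin 3)) i) * f ω ∂σS :=
    (integral_pos_iff_support_of_nonneg (fun ω => hg_nonneg ω) hg_int).mpr hsupg
  have hD : ∫ ω, (1 + s * v i) * (1 + s * (ω : EuclideanSpace ℝ (Fin 3)) i) * f ω ∂σS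
      = (1 + s * v i) * ∫ ω, (1 + s * (ω : EuclideanSpace ℝ (Fin 3)) i) * f ω ∂σS := by
    simp_rw [mul_assoc]
    exact integral_const_mul _ _
  constructor
  · rw [hD]
    exact mul_pos hc (mul_pos ha hgpos)
  -- second part
  set V : EuclideanSpace ℝ (Fin 3) :=
    ∫ ω, ((1 + s * (ω : EuclideanSpace ℝ (Fin 3)) i) * f ω) • (ω : EuclideanSpace ℝ (Fin 3)) ∂σS
    with hVdef
  have hnormF : ∀ ω : sphere (0 : EuclideanSpace ℝ (Fin 3)) 1,
      ‖((1 + s * (ω : EuclideanSpace ℝ (Fin 3)) i) * f ω) • (ω : EuclideanSpace ℝ (Fin 3))‖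
        = (1 + s * (ω : EuclideanSpace ℝ (Fin 3)) i) * f ω := by
    intro ω
    rw [norm_smul, norm_eq_of_mem_sphere ω, mul_one, Real.norm_eq_abs,
      abs_of_nonneg (hg_nonneg ω)]
  have hF_int : Integrable (fun ω : sphere (0 : EuclideanSpace ℝ (Fin 3)) 1 =>
      ((1 + s * (ω : EuclideanSpace ℝ (Fin 3)) i) * f ω) • (ω : EuclideanSpace ℝ (Fin 3))) σS := by
    refine Integrable.mono' hg_int.norm
      (hg_int.aestronglyMeasurable.smul continuous_subtype_val.aestronglyMeasurable)
      (Filter.Eventually.of_forall fun ω => ?_)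
    rw [hnormF ω, Real.norm_eq_abs, abs_of_nonneg (hg_nonneg ω)]
  have hVj : ∀ j, ∫ ω, (1 + s * (ω : EuclideanSpace ℝ (Fin 3)) i) * f ω *
      (ω : EuclideanSpace ℝ (Fin 3)) j ∂σS = V j := by
    intro j
    have h := (EuclideanSpace.proj j : EuclideanSpace ℝ (Fin 3) →L[ℝ] ℝ).integral_comp_comm hF_int
    simpa only [_root_.map_smul, PiLp.proj_apply, smul_eq_mul] using h
  have hIj : ∀ j, ∫ ω, (1 + s * v i) * (1 + s * (ω : EuclideanSpace ℝ (Fin 3)) i) * f ω *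
      (ω : EuclideanSpace ℝ (Fin 3)) j ∂σS = (1 + s * v i) * V j := by
    intro j
    rw [← hVj j, ← integral_const_mul]
    congr 1
    funext ω
    ring
  rw [hD]
  simp only [hIj]
  have hca : 0 ≤ (1/(4*Real.pi)) * (1 + s * v i) := le_of_lt (mul_pos hc ha)
  have hnormV : Real.sqrt (∑ j, ((1/(4*Real.pi)) * ((1 + s * v i) * V j)) ^ 2)
      = (1/(4*Real.pi)) * (1 + s * v i) * ‖V‖ := by
    rw [EuclideanSpace.norm_eq]
    rw [show ∑ j, ((1/(4*Real.pi)) * ((1 + s * v i) * V j)) ^ 2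
        = ((1/(4*Real.pi)) * (1 + s * v i)) ^ 2 * ∑ j, ‖V j‖ ^ 2 by
      rw [Finset.mul_sum]; congr 1; funext j; rw [Real.norm_eq_abs, sq_abs]; ring]
    rw [Real.sqrt_mul (sq_nonneg _), Real.sqrt_sq hca]
  rw [hnormV, mul_assoc]
  refine mul_le_mul_of_nonneg_left ?_ hc.le
  refine mul_le_mul_of_nonneg_left ?_ ha.le
  calc ‖V‖ ≤ ∫ ω, ‖((1 + s * (ω : EuclideanSpace ℝ (Fin 3)) i) * f ω) •
        (ω : EuclideanSpace ℝ (Fin 3))‖ ∂σS := norm_integral_le_integral_norm _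
    _ = ∫ ω, (1 + s * (ω : EuclideanSpace ℝ (Fin 3)) i) * f ω ∂σS := by
        exact integral_congr_ae (Filter.Eventually.of_forall fun ω => hnormF ω)
end

section
/- Let (D, I) ∈ R (i.e., D > 0, |I| ≤ D) be moments of a nonnegative distribution f on S², with I_j = (1/4π)∫ f ℓ_j dω, D = (1/4π)∫ f dω, and K_{ij} = (1/4π)∫ f ℓ_i ℓ_j dω. Let v ∈ ℝ³ with |v| < 1 and define N = D + vⁱI_i and G_j = I_j + vⁱK_{ij}. Then (N, G) ∈ R, i.e., N > 0 and |G| ≤ N. -/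
open MeasureTheory Metric

namespace Stmt12Aux

local notation "S" => sphere (0 : EuclideanSpace ℝ (Fin 3)) 1

lemma coord_cont (j : Fin 3) : Continuous (fun ω : S => (ω : EuclideanSpace ℝ (Fin 3)) j) :=
  (EuclideanSpace.proj j).continuous.comp continuous_subtype_val

lemma sum_sq_coord (ω : S) : ∑ j, (ω : EuclideanSpace ℝ (Fin 3)) j ^ 2 = 1 := by
  have h : ‖(ω : EuclideanSpace ℝ (Fin 3))‖ = 1 :=
    mem_sphere_zero_iff_norm.mp ω.2
  have := EuclideanSpace.norm_eq (ω : EuclideanSpace ℝ (Fin 3))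
  rw [h] at this
  have h2 : Real.sqrt (∑ j, ‖(ω : EuclideanSpace ℝ (Fin 3)) j‖ ^ 2) = 1 := this.symm
  have := (Real.sqrt_eq_one.mp h2)
  simpa [Real.norm_eq_abs, sq_abs] using this

lemma intg {f : S → ℝ} (hf : Integrable f σS) (h : S → ℝ) (hc : Continuous h) :
    Integrable (fun ω => f ω * h ω) σS := by
  obtain ⟨C, hC⟩ := isCompact_univ.exists_bound_of_continuousOn hc.continuousOn
  exact (hf.bdd_mul hc.aestronglyMeasurable (Filter.Eventually.of_forall fun ω => hC ω (Set.mem_univ ω))).congr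
    (Filter.Eventually.of_forall fun ω => mul_comm _ _)

end Stmt12Aux

open Stmt12Aux in
theorem stmt12 (f : sphere (0 : EuclideanSpace ℝ (Fin 3)) 1 → ℝ)
    (hf_nonneg : ∀ ω, 0 ≤ f ω) (hf_int : Integrable f σS)
    (D : ℝ) (I : Fin 3 → ℝ) (K : Fin 3 → Fin 3 → ℝ)
    (hD : D = (1/(4*Real.pi)) * ∫ ω, f ω ∂σS)
    (hI : ∀ j, I j = (1/(4*Real.pi)) * ∫ ω, f ω * (ω : EuclideanSpace ℝ (Fin 3)) j ∂σS)
    (hK : ∀ i j, K i j = (1/(4*Real.pi)) *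
        ∫ ω, f ω * (ω : EuclideanSpace ℝ (Fin 3)) i * (ω : EuclideanSpace ℝ (Fin 3)) j ∂σS)
    (hDpos : 0 < D) (hID : Real.sqrt (∑ j, I j ^ 2) ≤ D)
    (v : Fin 3 → ℝ) (hv : Real.sqrt (∑ i, v i ^ 2) < 1) :
    0 < D + ∑ i, v i * I i ∧
    Real.sqrt (∑ j, (I j + ∑ i, v i * K i j) ^ 2) ≤ D + ∑ i, v i * I i := by
  set c : ℝ := 1/(4*Real.pi) with hcdef
  have hcpos : 0 < c := by positivity
  -- basic nonneg sums
  have hvsq : ∑ i, v i ^ 2 < 1 := by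
    have h0 : (0:ℝ) ≤ ∑ i, v i ^ 2 := Finset.sum_nonneg fun i _ => sq_nonneg _
    nlinarith [Real.sq_sqrt h0, Real.sqrt_nonneg (∑ i, v i ^ 2)]
  have hIsq : (0:ℝ) ≤ ∑ j, I j ^ 2 := Finset.sum_nonneg fun j _ => sq_nonneg _
  -- N > 0
  have hN : 0 < D + ∑ i, v i * I i := by
    have hcs : (∑ i, v i * I i) ^ 2 ≤ (∑ i, v i ^ 2) * (∑ i, I i ^ 2) :=
      Finset.sum_mul_sq_le_sq_mul_sq _ _ _
    have h1 : Real.sqrt (∑ j, I j ^ 2) ^ 2 = ∑ j, I j ^ 2 := Real.sq_sqrt hIsq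
    have hv0 : (0:ℝ) ≤ ∑ i, v i ^ 2 := Finset.sum_nonneg fun i _ => sq_nonneg _
    have h2 : Real.sqrt (∑ i, v i ^ 2) ^ 2 = ∑ i, v i ^ 2 := Real.sq_sqrt hv0
    nlinarith [Real.sqrt_nonneg (∑ j, I j ^ 2), Real.sqrt_nonneg (∑ i, v i ^ 2),
      sq_nonneg ((∑ i, v i * I i) + Real.sqrt (∑ i, v i ^ 2) * Real.sqrt (∑ j, I j ^ 2)),
      mul_nonneg (Real.sqrt_nonneg (∑ i, v i ^ 2)) (Real.sqrt_nonneg (∑ j, I j ^ 2)),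
      mul_le_mul_of_nonneg_left hID (Real.sqrt_nonneg (∑ i, v i ^ 2)),
      mul_lt_mul_of_pos_right hv hDpos]
  refine ⟨hN, ?_⟩
  -- the weighted distribution
  set g : sphere (0 : EuclideanSpace ℝ (Fin 3)) 1 → ℝ :=
    fun ω => f ω * (1 + ∑ i, v i * (ω : EuclideanSpace ℝ (Fin 3)) i) with hgdef
  have hweight_cont : Continuous
      (fun ω : sphere (0 : EuclideanSpace ℝ (Fin 3)) 1 =>
        1 + ∑ i, v i * (ω : EuclideanSpace ℝ (Fin 3)) i) :=
    continuous_const.add (continuous_finset_sum _ fun i _ => (continuous_const.mul (coord_cont i)))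
  have hg_int : Integrable g σS := intg hf_int _ hweight_cont
  have hg_nonneg : ∀ ω, 0 ≤ g ω := by
    intro ω
    have hcs : (∑ i, v i * (ω : EuclideanSpace ℝ (Fin 3)) i) ^ 2
        ≤ (∑ i, v i ^ 2) * (∑ i, (ω : EuclideanSpace ℝ (Fin 3)) i ^ 2) :=
      Finset.sum_mul_sq_le_sq_mul_sq _ _ _
    rw [sum_sq_coord ω, mul_one] at hcs
    have : 0 ≤ 1 + ∑ i, v i * (ω : EuclideanSpace ℝ (Fin 3)) i := by nlinarith
    exact mul_nonneg (hf_nonneg ω) this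
  -- integrability of f * coord products
  have hint1 : ∀ j, Integrable (fun ω => f ω * (ω : EuclideanSpace ℝ (Fin 3)) j) σS :=
    fun j => intg hf_int _ (coord_cont j)
  have hint2 : ∀ i j, Integrable
      (fun ω => f ω * (ω : EuclideanSpace ℝ (Fin 3)) i * (ω : EuclideanSpace ℝ (Fin 3)) j) σS := by
    intro i j
    have := intg hf_int _ ((coord_cont i).mul (coord_cont j))
    exact this.congr (Filter.Eventually.of_forall fun ω => by simp only [Pi.mul_apply]; ring)
  -- N = c * ∫ g
  have keyN : D + ∑ i, v i * I i = c * ∫ ω, g ω ∂σS := by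
    have heq : ∫ ω, g ω ∂σS = (∫ ω, f ω ∂σS)
        + ∑ i, v i * ∫ ω, f ω * (ω : EuclideanSpace ℝ (Fin 3)) i ∂σS := by
      have : ∀ ω, g ω = f ω + ∑ i, v i * (f ω * (ω : EuclideanSpace ℝ (Fin 3)) i) := by
        intro ω; simp only [hgdef]; rw [mul_add, mul_one, Finset.mul_sum]
        congr 1; refine Finset.sum_congr rfl fun i _ => by ring
      rw [integral_congr_ae (Filter.Eventually.of_forall this),
        integral_add hf_int (integrable_finset_sum _ fun i _ => (hint1 i).const_mul (v i)),
        integral_finset_sum _ fun i _ => (hint1 i).const_mul (v i)]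
      simp [integral_const_mul]
    rw [heq, hD, mul_add, Finset.mul_sum]
    congr 1; refine Finset.sum_congr rfl fun i _ => by rw [hI i]; ring
  -- G j = c * ∫ g ω_j
  have keyG : ∀ j, I j + ∑ i, v i * K i j
      = c * ∫ ω, g ω * (ω : EuclideanSpace ℝ (Fin 3)) j ∂σS := by
    intro j
    have heq : ∫ ω, g ω * (ω : EuclideanSpace ℝ (Fin 3)) j ∂σS
        = (∫ ω, f ω * (ω : EuclideanSpace ℝ (Fin 3)) j ∂σS)
        + ∑ i, v i * ∫ ω, f ω * (ω : EuclideanSpace ℝ (Fin 3)) i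
            * (ω : EuclideanSpace ℝ (Fin 3)) j ∂σS := by
      have hptw : ∀ ω, g ω * (ω : EuclideanSpace ℝ (Fin 3)) j
          = f ω * (ω : EuclideanSpace ℝ (Fin 3)) j
          + ∑ i, v i * (f ω * (ω : EuclideanSpace ℝ (Fin 3)) i
              * (ω : EuclideanSpace ℝ (Fin 3)) j) := by
        intro ω; simp only [hgdef]
        have h1 : f ω * (∑ i, v i * (ω : EuclideanSpace ℝ (Fin 3)) i)
            * (ω : EuclideanSpace ℝ (Fin 3)) j
            = ∑ i, v i * (f ω * (ω : EuclideanSpace ℝ (Fin 3)) i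
                * (ω : EuclideanSpace ℝ (Fin 3)) j) := by
          rw [Finset.mul_sum, Finset.sum_mul]
          exact Finset.sum_congr rfl fun i _ => by ring
        rw [← h1]; ring
      rw [integral_congr_ae (Filter.Eventually.of_forall hptw),
        integral_add (hint1 j) (integrable_finset_sum _ fun i _ => (hint2 i j).const_mul (v i)),
        integral_finset_sum _ fun i _ => (hint2 i j).const_mul (v i)]
      simp [integral_const_mul]
    rw [heq, mul_add, Finset.mul_sum, hI j]
    congr 1; refine Finset.sum_congr rfl fun i _ => by rw [hK i j]; ring
  -- abbreviations
  set G : Fin 3 → ℝ := fun j => I j + ∑ i, v i * K i j with hGdef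
  set s : ℝ := Real.sqrt (∑ j, G j ^ 2) with hsdef
  have hs0 : 0 ≤ s := Real.sqrt_nonneg _
  have hssq : s ^ 2 = ∑ j, G j ^ 2 :=
    Real.sq_sqrt (Finset.sum_nonneg fun j _ => sq_nonneg _)
  -- key inequality: ∑ G j ^ 2 ≤ N * s
  have hkey : ∑ j, G j ^ 2 ≤ (D + ∑ i, v i * I i) * s := by
    have h1 : ∑ j, G j ^ 2
        = c * ∫ ω, g ω * (∑ j, G j * (ω : EuclideanSpace ℝ (Fin 3)) j) ∂σS := by
      have heq : ∫ ω, g ω * (∑ j, G j * (ω : EuclideanSpace ℝ (Fin 3)) j) ∂σS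
          = ∑ j, G j * ∫ ω, g ω * (ω : EuclideanSpace ℝ (Fin 3)) j ∂σS := by
        have hptw : ∀ ω, g ω * (∑ j, G j * (ω : EuclideanSpace ℝ (Fin 3)) j)
            = ∑ j, G j * (g ω * (ω : EuclideanSpace ℝ (Fin 3)) j) := by
          intro ω; rw [Finset.mul_sum]; exact Finset.sum_congr rfl fun j _ => by ring
        rw [integral_congr_ae (Filter.Eventually.of_forall hptw),
          integral_finset_sum _ fun j _ =>
            ((intg hf_int _ (hweight_cont.mul (coord_cont j))).congr
              (Filter.Eventually.of_forall fun ω => by simp only [hgdef, Pi.mul_apply]; ring)).const_mul (G j)]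
        simp [integral_const_mul]
      rw [heq, Finset.mul_sum]
      refine Finset.sum_congr rfl fun j _ => ?_
      have hGj : G j = c * ∫ ω, g ω * (ω : EuclideanSpace ℝ (Fin 3)) j ∂σS := keyG j
      rw [hGj]; ring
    have h2 : c * ∫ ω, g ω * (∑ j, G j * (ω : EuclideanSpace ℝ (Fin 3)) j) ∂σS
        ≤ c * ∫ ω, g ω * s ∂σS := by
      refine mul_le_mul_of_nonneg_left ?_ (le_of_lt hcpos)
      refine integral_mono ?_ (hg_int.mul_const s) ?_
      · exact intg hg_int _ (continuous_finset_sum _ fun j _ => continuous_const.mul (coord_cont j))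
      · intro ω
        refine mul_le_mul_of_nonneg_left ?_ (hg_nonneg ω)
        have hcs : (∑ j, G j * (ω : EuclideanSpace ℝ (Fin 3)) j) ^ 2
            ≤ (∑ j, G j ^ 2) * (∑ j, (ω : EuclideanSpace ℝ (Fin 3)) j ^ 2) :=
          Finset.sum_mul_sq_le_sq_mul_sq _ _ _
        rw [sum_sq_coord ω, mul_one, ← hssq] at hcs
        nlinarith [hs0]
    have h3 : c * ∫ ω, g ω * s ∂σS = (D + ∑ i, v i * I i) * s := by
      rw [integral_mul_const, keyN]; ring
    linarith [h1 ▸ (h3 ▸ h2)]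
  -- conclude
  show s ≤ D + ∑ i, v i * I i
  rcases eq_or_lt_of_le hs0 with h|h
  · rw [← h]; linarith
  · have h2 : s ^ 2 ≤ (D + ∑ i, v i * I i) * s := hssq ▸ hkey
    nlinarith
end

section
/- Suppose the spatial-flux Jacobian of the one-dimensional two-moment model is J(v,h) = (1/(1 − v²ψ + v(1+vh)ψ′)) · [[v − vψ + v(v+h)ψ′, 1 − v²],[(1 − v²)(ψ − hψ′), v − vψ + (1+vh)ψ′]] with ψ = ψ_a(h) = 1/3 + (2/15)(3h² − h³ + 3h⁴) and ψ′ = ψ_a′(h). Then for v = 0 and all h ∈ [0,1], both eigenvalues of J(0,h) are real and lie in [−1, 1]. -/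
/-- Spatial-flux Jacobian of the one-dimensional two-moment model. -/
noncomputable def J (v h : ℝ) : Matrix (Fin 2) (Fin 2) ℝ :=
  (1 / (1 - v^2 * ψa h + v * (1 + v*h) * deriv ψa h)) •
    !![v - v * ψa h + v * (v + h) * deriv ψa h, 1 - v^2;
       (1 - v^2) * (ψa h - h * deriv ψa h), v - v * ψa h + (1 + v*h) * deriv ψa h]

lemma deriv_psa (x : ℝ) : deriv ψa x = (2/15)*(6*x - 3*x^2 + 12*x^3) := by
  have H : HasDerivAt ψa ((2/15)*(6*x - 3*x^2 + 12*x^3)) x := by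
    unfold ψa
    have h2 := hasDerivAt_pow 2 x
    have h3 := hasDerivAt_pow 3 x
    have h4 := hasDerivAt_pow 4 x
    have := (((h2.const_mul 3).fun_sub h3).fun_add (h4.const_mul 3)).const_mul (2/15 : ℝ)
    have := (hasDerivAt_const x (1/3 : ℝ)).fun_add this
    refine this.congr_deriv ?_
    push_cast
    ring
  exact H.deriv

lemma quad_bounds (h x y b c : ℝ) (hh0 : 0 ≤ h) (hh1 : h ≤ 1)
    (hb : b = (2/15)*(6*h - 3*h^2 + 12*h^3))
    (hc : c = 1/3 + (2/15) * (3*h^2 - h^3 + 3*h^4) - h * b)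
    (him : 2*x*y - b*y = 0)
    (hre : x^2 - y^2 - b*x - c = 0) :
    y = 0 ∧ -1 ≤ x ∧ x ≤ 1 := by
  have hD : 0 ≤ b^2 + 4*c := by
    have : b^2 + 4*c = (4/225)*(1-h)^2*(144*h^4+216*h^3+171*h^2+150*h+75) := by
      rw [hb, hc, hb]; ring
    rw [this]; positivity
  have h1 : 1 - b - c = (2/15)*(1-h)^2*(9*h^2+4*h+5) := by rw [hb, hc, hb]; ring
  have h1' : 0 ≤ 1 - b - c := by rw [h1]; positivity
  have h2 : 0 ≤ 1 + b - c := by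
    have : 1 + b - c = (2/15)*(5 + 6*h + 10*h^3 + 9*h^4) := by rw [hb, hc, hb]; ring
    rw [this]; positivity
  have hb0 : 0 ≤ b := by rw [hb]; nlinarith
  have hb2 : b ≤ 2 := by rw [hb]; nlinarith [sq_nonneg (1-h), sq_nonneg h]
  have hy : y = 0 := by
    rcases mul_eq_zero.mp (show y * (2*x - b) = 0 by linarith) with hy | hx
    · exact hy
    · nlinarith [sq_nonneg y]
  subst hy
  refine ⟨rfl, ?_, ?_⟩
  · by_contra hx; push_neg at hx
    nlinarith [mul_pos (show 0 < -1 - x by linarith) (show 0 < b + 1 - x by linarith)]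
  · by_contra hx; push_neg at hx
    nlinarith [mul_pos (show 0 < x - 1 by linarith) (show 0 < x + 1 - b by linarith)]

theorem stmt16 (h : ℝ) (hh : h ∈ Set.Icc (0:ℝ) 1) :
    ∀ z ∈ spectrum ℂ ((J 0 h).map (algebraMap ℝ ℂ)),
      z.im = 0 ∧ -1 ≤ z.re ∧ z.re ≤ 1 := by
  intro z hz
  have hz0 : z^2 - Complex.ofReal (deriv ψa h) * z
      - Complex.ofReal (ψa h - h * deriv ψa h) = 0 := by
    have hJ : J 0 h = !![0, 1; ψa h - h * deriv ψa h, deriv ψa h] := by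
      unfold J; norm_num
    rw [hJ] at hz
    rw [spectrum.mem_iff] at hz
    rw [Matrix.isUnit_iff_isUnit_det, isUnit_iff_ne_zero, not_not] at hz
    simp [Matrix.det_fin_two, Matrix.map_apply, Matrix.algebraMap_eq_diagonal] at hz
    push_cast
    linear_combination hz
  set b : ℝ := deriv ψa h with hbdef
  set c : ℝ := ψa h - h * deriv ψa h with hcdef
  have him : 2*z.re*z.im - b*z.im = 0 := by
    have := congrArg Complex.im hz0
    simp [pow_two, Complex.mul_im] at this
    linarith
  have hre : z.re^2 - z.im^2 - b*z.re - c = 0 := by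
    have := congrArg Complex.re hz0
    simp [pow_two, Complex.mul_re] at this
    linarith
  have := quad_bounds h z.re z.im b c hh.1 hh.2
    (by rw [hbdef, deriv_psa]) (by rw [hcdef, hbdef]; unfold ψa; ring) him hre
  exact ⟨this.1, this.2.1, this.2.2⟩
end

section
/- Let v_h, θ ∈ ℝ with |v_h| < 1, let μ ∈ [−1,1], μ ≠ 0, μ ≠ ±1, and suppose 0 < Δt ≤ (1/2)(1 − |v_h|)/|θ| where θ ≠ 0. Then [μ − Δt·θ·μ·(1−μ²)/(1+v_h μ)]² ≤ 1. -/
theorem stmt19 (vh θ μ Δt : ℝ) (hv : |vh| < 1)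
    (hμ : μ ∈ Set.Icc (-1:ℝ) 1) (hμ0 : μ ≠ 0) (hμ1 : μ ≠ 1) (hμm1 : μ ≠ -1)
    (hθ : θ ≠ 0) (hΔt0 : 0 < Δt) (hΔt : Δt ≤ (1/2) * (1 - |vh|) / |θ|) :
    (μ - Δt * θ * μ * (1 - μ^2) / (1 + vh * μ))^2 ≤ 1 := by
  obtain ⟨hμl, hμr⟩ := hμ
  have habsμ : |μ| ≤ 1 := abs_le.mpr ⟨hμl, hμr⟩
  have hvm : |vh * μ| < 1 := by
    rw [abs_mul]
    calc |vh| * |μ| ≤ |vh| * 1 := by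
          exact mul_le_mul_of_nonneg_left habsμ (abs_nonneg _)
      _ < 1 := by linarith
  have hd : 0 < 1 + vh * μ := by
    have := abs_lt.mp hvm
    linarith [this.1]
  have hθpos : 0 < |θ| := abs_pos.mpr hθ
  have ha : Δt * |θ| ≤ (1 - |vh|) / 2 := by
    have := (le_div_iff₀ hθpos).mp hΔt
    linarith
  have haabs : |Δt * θ| ≤ (1 - |vh|) / 2 := by
    rw [abs_mul, abs_of_pos hΔt0]; exact ha
  obtain ⟨ha1, ha2⟩ := abs_le.mp haabs
  have hvm' : -|vh| ≤ vh * μ := by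
    have := abs_le.mp (le_of_lt hvm)
    have h1 : |vh * μ| ≤ |vh| := by
      rw [abs_mul]
      calc |vh| * |μ| ≤ |vh| * 1 := mul_le_mul_of_nonneg_left habsμ (abs_nonneg _)
        _ = |vh| := by ring
    linarith [(abs_le.mp h1).1]
  have h2 : (0:ℝ) ≤ 1 - μ^2 := by nlinarith
  have hda : |Δt * θ| ≤ (1 + vh * μ) / 2 := by
    have h3 : 1 - |vh| ≤ 1 + vh * μ := by linarith
    linarith
  have hbound : |μ * (1 + vh * μ) - (Δt * θ) * μ * (1 - μ^2)| ≤ 1 + vh * μ := by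
    calc |μ * (1 + vh * μ) - (Δt * θ) * μ * (1 - μ^2)|
        ≤ |μ * (1 + vh * μ)| + |(Δt * θ) * μ * (1 - μ^2)| := abs_sub _ _
      _ = |μ| * (1 + vh * μ) + |Δt * θ| * (|μ| * (1 - μ^2)) := by
          rw [abs_mul, abs_mul, abs_mul, abs_of_pos hd, abs_of_nonneg h2]; ring
      _ ≤ |μ| * (1 + vh * μ) + ((1 + vh * μ)/2) * (|μ| * (1 - μ^2)) := by
          have hnn : 0 ≤ |μ| * (1 - μ^2) := mul_nonneg (abs_nonneg _) h2
          nlinarith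
      _ ≤ 1 + vh * μ := by
          have hm : 0 ≤ 2 - 3 * |μ| + |μ|^3 := by
            nlinarith [sq_nonneg (1 - |μ|), abs_nonneg μ]
          nlinarith [mul_nonneg hd.le hm, sq_abs μ]
  obtain ⟨hb1, hb2⟩ := abs_le.mp hbound
  have hkey : (μ * (1 + vh * μ) - (Δt * θ) * μ * (1 - μ^2))^2 ≤ (1 + vh * μ)^2 :=
    sq_le_sq' hb1 hb2
  have hrw : μ - Δt * θ * μ * (1 - μ^2) / (1 + vh * μ)
      = (μ * (1 + vh * μ) - (Δt * θ) * μ * (1 - μ^2)) / (1 + vh * μ) := by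
    field_simp
    rw [sub_div, div_self (by rw [mul_comm]; exact hd.ne' : (1 + μ * vh) ≠ 0)]
  rw [hrw, div_pow]
  rw [div_le_one (by positivity)]
  simpa using hkey
end
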